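/- If p is a prime dividing F_{p-1}, then R_n^(p-1) ≡ I_n (mod p). -/
import Mathlib

open Polynomial Finset

/-! ### Auxiliary: Fibonacci facts mod `p` via the ring `ZMod p [X] / (X² - X - 1)` -/

lemma fib_pred_cast (p : ℕ) (hp : p.Prime) (hdvd : p ∣ Nat.fib (p - 1)) :
    (Nat.fib p : ZMod p) = 1 ∧ (Nat.fib (p-1) : ZMod p) = 0 := by
  haveI : Fact p.Prime := ⟨hp⟩
  have hp2 : p ≠ 2 := by
    rintro rfl
    simp [Nat.fib] at hdvd
  have hodd : Odd p := hp.odd_of_ne_two hp2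
  have hd0 : (Nat.fib (p-1) : ZMod p) = 0 := (ZMod.natCast_eq_zero_iff _ _).2 hdvd
  refine ⟨?_, hd0⟩
  set f : (ZMod p)[X] := X^2 - X - 1 with hf
  have hdeg : f.degree = 2 := by rw [hf]; compute_degree!
  haveI : Nontrivial (AdjoinRoot f) := AdjoinRoot.nontrivial f (by rw [hdeg]; norm_num)
  haveI : CharP (AdjoinRoot f) p :=
    charP_of_injective_algebraMap (algebraMap (ZMod p) (AdjoinRoot f)).injective p
  set α : AdjoinRoot f := AdjoinRoot.root f with hα
  have hroot : α ^ 2 = α + 1 := by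
    have := AdjoinRoot.eval₂_root f
    rw [hf] at this
    simp only [eval₂_sub, eval₂_pow, eval₂_X, eval₂_one] at this
    rw [← hf] at this
    linear_combination this
  have hpow : ∀ k, α ^ (k+1) = (Nat.fib (k+1) : AdjoinRoot f) * α + (Nat.fib k : AdjoinRoot f) := by
    intro k
    induction k with
    | zero => simp
    | succ k ih =>
      have : α ^ (k+2) = α ^ (k+1) * α := by ring
      rw [this, ih, Nat.fib_add_two]
      push_cast
      linear_combination ((Nat.fib (k+1) : AdjoinRoot f)) * hroot
  set c : ZMod p := (Nat.fib p : ZMod p) with hc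
  have hcast : (Nat.fib p : AdjoinRoot f) = algebraMap (ZMod p) (AdjoinRoot f) c := by
    simp [hc]
  have hap : α ^ p = algebraMap (ZMod p) (AdjoinRoot f) c * α := by
    have h1 : p - 1 + 1 = p := Nat.succ_pred_eq_of_pos hp.pos
    have := hpow (p-1)
    rw [h1] at this
    rw [this, hcast]
    have : (Nat.fib (p-1) : AdjoinRoot f)
        = algebraMap (ZMod p) (AdjoinRoot f) (Nat.fib (p-1) : ZMod p) := by simp
    rw [this, hd0]
    simp
  have hprod : α * (1 - α) = -1 := by linear_combination -hroot
  have key : algebraMap (ZMod p) (AdjoinRoot f) c * α *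
      (1 - algebraMap (ZMod p) (AdjoinRoot f) c * α) = -1 := by
    have h1 : (α * (1 - α)) ^ p = -1 := by
      rw [hprod]
      exact hodd.neg_one_pow
    rw [mul_pow, sub_pow_char, one_pow, hap] at h1
    exact h1
  have hlin : algebraMap (ZMod p) (AdjoinRoot f) (c - c^2) * α
      + algebraMap (ZMod p) (AdjoinRoot f) (1 - c^2) = 0 := by
    rw [map_sub, map_sub, map_one, map_pow]
    linear_combination key + (algebraMap (ZMod p) (AdjoinRoot f) c)^2 * hroot
  have hextract : ∀ r s : ZMod p,
      algebraMap (ZMod p) (AdjoinRoot f) r * α + algebraMap (ZMod p) (AdjoinRoot f) s = 0 →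
      r = 0 ∧ s = 0 := by
    intro r s h
    have heq : AdjoinRoot.mk f (C r * X + C s) = 0 := by
      rw [map_add, map_mul, AdjoinRoot.mk_C, AdjoinRoot.mk_X, AdjoinRoot.mk_C]
      exact h
    have hdvd' : f ∣ C r * X + C s := (AdjoinRoot.mk_eq_zero).1 heq
    have hz : C r * X + C s = 0 := by
      refine Polynomial.eq_zero_of_dvd_of_degree_lt hdvd' ?_
      rw [hdeg]
      exact lt_of_le_of_lt (degree_linear_le) (by norm_num)
    constructor
    · have := congrArg (fun q => Polynomial.coeff q 1) hz
      simpa using this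
    · have := congrArg (fun q => Polynomial.coeff q 0) hz
      simpa using this
  obtain ⟨h1, h2⟩ := hextract _ _ hlin
  have hc2 : c^2 = 1 := by linear_combination -h2
  have : c = c^2 := by linear_combination h1 + hc2 - hc2
  exact this.trans hc2

/-! ### Auxiliary: the substitution matrices `Emat` -/

noncomputable def Emat {K : Type*} [CommRing K] (m : ℕ) (P Q : K[X]) :
    Matrix (Fin (m+1)) (Fin (m+1)) K :=
  Matrix.of fun i j => (P ^ (j:ℕ) * Q ^ (m - (j:ℕ))).coeff i

variable {K : Type*} [CommRing K]

lemma key_sum (P Q : K[X]) (m j : ℕ) (hj : j ≤ m) :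
    ∑ l ∈ Finset.range (m+1),
      C (((X+1)^j * X^(m-j) : K[X]).coeff l) * (P^l * Q^(m-l))
      = (P+Q)^j * P^(m-j) := by
  have hsub : Finset.Ico (m-j) (m+1) ⊆ Finset.range (m+1) := by
    intro x hx
    simp only [Finset.mem_Ico] at hx
    simp [hx.2]
  rw [← Finset.sum_subset hsub ?hz]
  case hz =>
    intro x hx hnx
    simp only [Finset.mem_range] at hx
    simp only [Finset.mem_Ico, not_and, not_lt] at hnx
    have hxlt : x < m - j := by
      by_contra h
      exact absurd (hnx (le_of_not_gt h)) (by omega)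
    rw [coeff_mul_X_pow', if_neg (by omega)]
    simp
  rw [Finset.sum_Ico_eq_sum_range]
  have hrange : m + 1 - (m - j) = j + 1 := by omega
  rw [hrange]
  have hterm : ∀ t ∈ Finset.range (j+1),
      C (((X+1)^j * X^(m-j) : K[X]).coeff (m - j + t)) * (P^(m-j+t) * Q^(m-(m-j+t)))
        = (P^t * Q^(j-t) * (j.choose t : K[X])) * P^(m-j) := by
    intro t ht
    simp only [Finset.mem_range] at ht
    rw [coeff_mul_X_pow', if_pos (by omega)]
    have h1 : m - j + t - (m - j) = t := by omega
    have h2 : m - (m - j + t) = j - t := by omega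
    rw [h1, h2, coeff_X_add_one_pow]
    rw [pow_add]
    have : (C ((j.choose t : K))) = ((j.choose t : K[X])) := by push_cast; rfl
    rw [this]
    ring
  rw [Finset.sum_congr rfl hterm, ← Finset.sum_mul, ← add_pow]

lemma Emat_mul (m : ℕ) (P Q : K[X]) :
    Emat m P Q * Emat m (X+1) X = Emat m (P+Q) P := by
  ext i j
  rw [Matrix.mul_apply]
  have hj : (j:ℕ) ≤ m := Nat.lt_succ_iff.mp j.isLt
  have : ∀ l : Fin (m+1), Emat m P Q i l * Emat m (X+1) X l j
      = (C (((X+1)^(j:ℕ) * X^(m-(j:ℕ)) : K[X]).coeff l) * (P^(l:ℕ) * Q^(m-(l:ℕ)))).coeff i := by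
    intro l
    simp [Emat, coeff_C_mul, mul_comm]
  simp only [this]
  rw [← Polynomial.finset_sum_coeff]
  rw [Fin.sum_univ_eq_sum_range
    (fun l => C (((X+1)^(j:ℕ) * X^(m-(j:ℕ)) : K[X]).coeff l) * (P^l * Q^(m-l)))]
  rw [key_sum P Q m (j:ℕ) hj]
  rfl

lemma Emat_pow (m k : ℕ) :
    (Emat (K:=K) m (X+1) X)^(k+1)
      = Emat m (C (Nat.fib (k+2) : K) * X + C (Nat.fib (k+1) : K))
              (C (Nat.fib (k+1) : K) * X + C (Nat.fib k : K)) := by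
  induction k with
  | zero =>
    rw [pow_one]
    have : (Nat.fib 0 : K) = 0 := by norm_num
    have h2 : (Nat.fib 2 : K) = 1 := by norm_num [Nat.fib_two]
    have h1 : (Nat.fib 1 : K) = 1 := by norm_num
    rw [this, h2, h1]
    norm_num
  | succ k ih =>
    rw [pow_succ, ih, Emat_mul]
    have e1 : (C (Nat.fib (k+2) : K) * X + C (Nat.fib (k+1) : K))
        + (C (Nat.fib (k+1) : K) * X + C (Nat.fib k : K))
        = C (Nat.fib (k+3) : K) * X + C (Nat.fib (k+2) : K) := by
      rw [show Nat.fib (k+3) = Nat.fib (k+1) + Nat.fib (k+2) from Nat.fib_add_two,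
          show Nat.fib (k+2) = Nat.fib k + Nat.fib (k+1) from Nat.fib_add_two]
      simp only [Nat.cast_add, map_add]
      ring
    rw [e1]

lemma Emat_X_one (m : ℕ) : Emat (K:=K) m X 1 = 1 := by
  ext i j
  simp only [Emat, Matrix.of_apply, one_pow, mul_one, coeff_X_pow, Matrix.one_apply,
    Fin.ext_iff]

/-- `R n` over `ZMod p`: the `n × n` matrix whose 1-based `(i,j)` entry is `C(i-1, n-j)`. -/
def RmatMod (p n : ℕ) : Matrix (Fin n) (Fin n) (ZMod p) :=
  Matrix.of fun i j => (Nat.choose i.1 (n - 1 - j.1) : ZMod p)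

lemma Rmat_eq_transpose (p m : ℕ) :
    RmatMod p (m+1) = Matrix.transpose (Emat (K := ZMod p) m (X+1) X) := by
  ext i j
  have hi : (i:ℕ) ≤ m := Nat.lt_succ_iff.mp i.isLt
  have hj : (j:ℕ) ≤ m := Nat.lt_succ_iff.mp j.isLt
  show (Nat.choose i.1 (m + 1 - 1 - j.1) : ZMod p)
      = ((X+1)^(i:ℕ) * X^(m-(i:ℕ)) : (ZMod p)[X]).coeff j
  rw [coeff_mul_X_pow']
  by_cases h : m - (i:ℕ) ≤ (j:ℕ)
  · rw [if_pos h, coeff_X_add_one_pow]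
    have : m + 1 - 1 - (j:ℕ) = (i:ℕ) - ((j:ℕ) - (m - (i:ℕ))) := by omega
    rw [this, Nat.choose_symm (by omega)]
  · rw [if_neg h]
    have : (i:ℕ) < m + 1 - 1 - (j:ℕ) := by omega
    rw [Nat.choose_eq_zero_of_lt this]
    norm_num

/-- If `p` is a prime dividing `F_{p-1}`, then `R_n ^ (p-1) ≡ I (mod p)`. -/
theorem Rmat_pow_p_sub_one (p n : ℕ) (hp : p.Prime) (hdvd : p ∣ Nat.fib (p - 1)) :
    RmatMod p n ^ (p - 1) = 1 := by
  obtain ⟨h1, h0⟩ := fib_pred_cast p hp hdvd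
  have hp2 : p ≠ 2 := by
    rintro rfl
    simp [Nat.fib] at hdvd
  have hp3 : 3 ≤ p := by
    have := hp.two_le
    omega
  cases n with
  | zero => ext i j; exact i.elim0
  | succ m =>
    have h2 : (Nat.fib (p-2) : ZMod p) = 1 := by
      have hpp : p - 2 + 2 = p := by omega
      have hf := Nat.fib_add_two (n := p-2)
      rw [hpp, show p - 2 + 1 = p - 1 by omega] at hf
      have hcast := congrArg (Nat.cast : ℕ → ZMod p) hf
      rw [Nat.cast_add, h0, h1] at hcast
      linear_combination -hcast
    rw [Rmat_eq_transpose]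
    rw [← Matrix.transpose_pow]
    have hexp : p - 1 = (p - 3) + 1 + 1 := by omega
    rw [hexp]
    rw [Emat_pow m ((p-3)+1)]
    rw [show p - 3 + 1 + 2 = p by omega, show p - 3 + 1 + 1 = p - 1 by omega,
        show p - 3 + 1 = p - 2 by omega]
    rw [h1, h0, h2]
    rw [map_one, map_zero]
    rw [show ((1 : (ZMod p)[X]) * X + 0) = X by ring, show ((0 : (ZMod p)[X]) * X + 1) = 1 by ring]
    rw [Emat_X_one]
    exact Matrix.transpose_one
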